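/- arXiv:2209.04852 — 3 statements merged into one kernel-verified Lean document; each statement's English description precedes it below -/
import Mathlib

section
/- Every ℤ[q₁^{±1},q₂^{±1}]-multiple of F_n = ∏_{1≤i,j≤n} (1 - q₂ z_i/z_j) lies in the integral shuffle algebra 𝒮: i.e., for any symmetric Laurent polynomial P, the element P·F_n satisfies all the divisibility conditions of Definition of 𝒮. -/
/- Framework: we work inside the field FF of rational functions over ℤ in
countably many variables q₁, q₂, z₀, z₁, z₂, … (the fraction field of
MvPolynomial ℕ ℤ).  A Laurent polynomial R(z₁,…,z_n) over ℤ[q₁^±,q₂^±] is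
encoded by its finitely supported coefficient function
c : (Fin n → ℤ) →₀ FF (with values in the Laurent subring ℤ[q₁^±,q₂^±]),
and `evalC c w` is its value ∑_m c_m ∏ w_i^{m_i} at a point w.  Since the z_i
are algebraically independent, equalities of such expressions at the generic
point w = (z₀,…,z_{n-1}) are equalities of rational functions. -/

noncomputable section

abbrev FF : Type := FractionRing (MvPolynomial ℕ ℤ)

noncomputable def q₁ : FF := algebraMap (MvPolynomial ℕ ℤ) FF (MvPolynomial.X 0)
noncomputable def q₂ : FF := algebraMap (MvPolynomial ℕ ℤ) FF (MvPolynomial.X 1)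
/-- the generic variables z_i (also used as the variables x_i of the
specializations in Definition `SatisfiesDiv`) -/
noncomputable def zz (i : ℕ) : FF := algebraMap (MvPolynomial ℕ ℤ) FF (MvPolynomial.X (i + 2))
noncomputable def q₃ : FF := (q₁ * q₂)⁻¹

noncomputable def zeta (x : FF) : FF :=
  (1 - x * q₁) * (1 - x * q₂) * (1 - q₁ * q₂ / x) / (1 - x)

/-- the Laurent polynomial subring ℤ[q₁^{±1},q₂^{±1}] ⊆ FF -/
noncomputable def Lq : Subring FF := Subring.closure {q₁, q₁⁻¹, q₂, q₂⁻¹}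

/-- the Laurent polynomial subring ℤ[q₁^{±1},q₂^{±1}][x₁^{±1},…,x_k^{±1}] ⊆ FF,
where x_i := zz i -/
noncomputable def Lqx (k : ℕ) : Subring FF :=
  Subring.closure ({q₁, q₁⁻¹, q₂, q₂⁻¹} ∪ (Set.range fun i : Fin k => zz i)
    ∪ (Set.range fun i : Fin k => (zz i)⁻¹))

/-- value of the Laurent polynomial with coefficients c at the point w -/
noncomputable def evalC {n : ℕ} (c : (Fin n → ℤ) →₀ FF) (w : Fin n → FF) : FF :=
  ∑ m ∈ c.support, c m * ∏ i, w i ^ (m i)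

/-- the specialization point (x₁, x₁q₂, …, x₁q₂^{n₁-1}, …, x_k, …, x_kq₂^{n_k-1})
attached to a partition (n₁,…,n_k), with x_i := zz i -/
noncomputable def specTuple {n : ℕ} (k : ℕ) (nn : Fin k → ℕ) : Fin n → FF :=
  fun j => (((List.finRange k).flatMap fun i =>
    (List.range (nn i)).map fun s => zz i * q₂ ^ s).getD j 1)

/-- the divisor (eqn "divisible by") attached to a partition (n₁ ≥ … ≥ n_k) -/
noncomputable def divisor (k : ℕ) (nn : Fin k → ℕ) : FF :=
  (∏ i : Fin k, ((1 - q₂) ^ (nn i) *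
      ∏ s ∈ Finset.Icc 1 (nn i - 1), zeta (q₂ ^ s) ^ (nn i - s))) *
  ∏ i : Fin k, ∏ j ∈ Finset.univ.filter (fun j : Fin k => i < j),
    ((∏ a ∈ Finset.Icc (1 : ℤ) ((nn i : ℤ) - 1), ∏ b ∈ Finset.Icc (0 : ℤ) ((nn j : ℤ) - 1),
        (zz i * q₁ - zz j * q₂ ^ (b - a))) *
     (∏ a ∈ Finset.Icc (1 : ℤ) ((nn i : ℤ) - 1), ∏ b ∈ Finset.Icc (0 : ℤ) ((nn j : ℤ) - 1),
        (zz j * q₁ - zz i * q₂ ^ (a - b - 1))))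

/-- coefficients lie in ℤ[q₁^{±1},q₂^{±1}] -/
def HasLqCoeffs {n : ℕ} (c : (Fin n → ℤ) →₀ FF) : Prop := ∀ m ∈ c.support, c m ∈ Lq

/-- the Laurent polynomial is symmetric in z₁,…,z_n -/
def IsSymmC {n : ℕ} (c : (Fin n → ℤ) →₀ FF) : Prop :=
  ∀ σ : Equiv.Perm (Fin n), ∀ m : Fin n → ℤ, c (m ∘ σ) = c m

/-- the divisibility conditions of Definition "shuffle": for every partition
(n₁ ≥ … ≥ n_k) ⊢ n, the specialization is divisible by `divisor` in
ℤ[q₁^{±1},q₂^{±1}][x₁^{±1},…,x_k^{±1}] -/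
def SatisfiesDiv {n : ℕ} (c : (Fin n → ℤ) →₀ FF) : Prop :=
  ∀ (k : ℕ) (nn : Fin k → ℕ), (∀ i, 0 < nn i) → Antitone nn → (∑ i, nn i) = n →
    ∃ g ∈ Lqx k, evalC c (specTuple k nn) = divisor k nn * g

/-- membership in the integral shuffle algebra 𝒮 (in degree n) -/
def InS {n : ℕ} (c : (Fin n → ℤ) →₀ FF) : Prop :=
  HasLqCoeffs c ∧ IsSymmC c ∧ SatisfiesDiv c

/-! Treat `P · F_n` as a product in the group algebra `FF[ℤⁿ]`. Both factors have coefficients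
in `ℤ[q₁^±, q₂^±]`, which is a subring, and both are invariant under permuting the variables,
since a permutation only permutes the factors `1 - q₂ zᵢ/zⱼ` of `F_n`. Evaluation at a point
with nonzero coordinates is a ring homomorphism, so every specialization factors as
`P(w) · F_n(w)`. If the partition has a part `nᵢ ≥ 2`, the point `w` contains both `xᵢ` and
`xᵢ q₂`, so `F_n(w) = 0`. For the partition `(1, …, 1)` the diagonal factors of `F_n` give
exactly the divisor `(1 - q₂)ⁿ`, and the off-diagonal ones are Laurent polynomials. -/

open AddMonoidAlgebra

namespace AddMonoidAlgebra

variable {R M : Type*} [CommRing R] [AddMonoid M]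

def coeffSubring (S : Subring R) : Subring (AddMonoidAlgebra R M) where
  carrier := {f | ∀ m, f.coeff m ∈ S}
  zero_mem' m := zero_mem S
  add_mem' hf hg m := by simpa using add_mem (hf m) (hg m)
  neg_mem' hf m := by simpa using neg_mem (hf m)
  one_mem' m := by
    classical
    rw [one_def, coeff_single, Finsupp.single_apply]
    split_ifs
    exacts [one_mem S, zero_mem S]
  mul_mem' {f g} hf hg m := by
    classical
    rw [coeff_mul]
    refine sum_mem fun a _ => sum_mem fun b _ => ?_
    dsimp only
    split_ifs
    exacts [mul_mem (hf a) (hg b), zero_mem S]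

theorem single_mem_coeffSubring {S : Subring R} {m : M} {r : R} (hr : r ∈ S) :
    single m r ∈ coeffSubring S := fun m' => by
  classical
  rw [coeff_single, Finsupp.single_apply]
  split_ifs
  exacts [hr, zero_mem S]

end AddMonoidAlgebra

section LaurentEval

variable {K ι : Type*} [Field K] [Fintype ι]

def laurentEval (w : ι → K) (hw : ∀ i, w i ≠ 0) : AddMonoidAlgebra K (ι → ℤ) →ₐ[K] K :=
  AddMonoidAlgebra.lift K K (ι → ℤ)
    { toFun := fun m => ∏ i, w i ^ m.toAdd i
      map_one' := by simp
      map_mul' := fun a b => by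
        simp only [toAdd_mul, Pi.add_apply, zpow_add₀ (hw _), Finset.prod_mul_distrib] }

theorem laurentEval_apply (w : ι → K) (hw : ∀ i, w i ≠ 0) (f : AddMonoidAlgebra K (ι → ℤ)) :
    laurentEval w hw f = ∑ m ∈ f.coeff.support, f.coeff m * ∏ i, w i ^ m i := by
  simp [laurentEval, AddMonoidAlgebra.lift_apply, Finsupp.sum]

theorem laurentEval_single (w : ι → K) (hw : ∀ i, w i ≠ 0) (m : ι → ℤ) (r : K) :
    laurentEval w hw (single m r) = r * ∏ i, w i ^ m i := by
  simp [laurentEval]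

theorem prod_zpow_single_sub_single [DecidableEq ι] (w : ι → K) (hw : ∀ i, w i ≠ 0) (i j : ι) :
    ∏ l, w l ^ (Pi.single i 1 - Pi.single j 1 : ι → ℤ) l = w i / w j := by
  simp [zpow_sub₀ (hw _), Finset.prod_div_distrib, Pi.single_apply]

end LaurentEval

section Perm

variable {ι : Type*}

def precompPerm (σ : Equiv.Perm ι) : (ι → ℤ) ≃+ (ι → ℤ) :=
  (LinearEquiv.funCongrLeft ℤ ℤ σ).toAddEquiv

theorem precompPerm_apply (σ : Equiv.Perm ι) (m : ι → ℤ) : precompPerm σ m = m ∘ σ := rfl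

theorem precompPerm_symm_apply (σ : Equiv.Perm ι) (m : ι → ℤ) :
    (precompPerm σ).symm m = m ∘ σ.symm := rfl

end Perm

section FPoly

variable {R ι : Type*} [CommRing R] [Fintype ι] [DecidableEq ι]

variable (ι) in
def FPoly (q : R) : AddMonoidAlgebra R (ι → ℤ) :=
  ∏ i, ∏ j, (1 - single (Pi.single i 1 - Pi.single j 1) q)

theorem FPoly_mem_coeffSubring {S : Subring R} {q : R} (hq : q ∈ S) :
    FPoly ι q ∈ coeffSubring S :=
  prod_mem fun _ _ => prod_mem fun _ _ => sub_mem (one_mem _) (single_mem_coeffSubring hq)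

theorem laurentEval_FPoly {K : Type*} [Field K] (w : ι → K) (hw : ∀ i, w i ≠ 0) (q : K) :
    laurentEval w hw (FPoly ι q) = ∏ i, ∏ j, (1 - q * w i / w j) := by
  simp only [FPoly, map_prod, map_sub, map_one, laurentEval_single,
    prod_zpow_single_sub_single w hw, mul_div_assoc]

theorem domCongr_FPoly (σ : Equiv.Perm ι) (q : R) :
    domCongr R R (precompPerm σ) (FPoly ι q) = FPoly ι q := by
  have hfactor : ∀ i j, domCongr R R (precompPerm σ)
      (1 - single (Pi.single i 1 - Pi.single j 1) q) =
      1 - single (Pi.single (σ.symm i) 1 - Pi.single (σ.symm j) 1) q := fun i j => by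
    rw [map_sub, map_one, domCongr_single, precompPerm_apply, Pi.sub_comp,
      Pi.single_comp_equiv, Pi.single_comp_equiv]
  simp only [FPoly, map_prod, hfactor]
  exact Fintype.prod_equiv σ.symm _ _ fun i => Fintype.prod_equiv σ.symm _ _ fun j => rfl

end FPoly

section Vanishing

variable {K ι : Type*} [Field K] [Fintype ι]

theorem prod_prod_one_sub_eq_zero {w : ι → K} {q : K} {a b : ι} (hb : w b = q * w a)
    (ha : q * w a ≠ 0) : ∏ i, ∏ j, (1 - q * w i / w j) = 0 :=
  Finset.prod_eq_zero (Finset.mem_univ a) <| Finset.prod_eq_zero (Finset.mem_univ b) <| by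
    rw [hb, div_self ha, sub_self]

theorem prod_prod_one_sub_eq [DecidableEq ι] {w : ι → K} (hw : ∀ i, w i ≠ 0) (q : K) :
    ∏ i, ∏ j, (1 - q * w i / w j) =
      (1 - q) ^ Fintype.card ι * ∏ i, ∏ j ∈ Finset.univ.erase i, (1 - q * w i / w j) := by
  have hdiag : ∀ i, ∏ j, (1 - q * w i / w j) =
      (1 - q) * ∏ j ∈ Finset.univ.erase i, (1 - q * w i / w j) := fun i => by
    rw [← Finset.mul_prod_erase _ _ (Finset.mem_univ i), mul_div_assoc, div_self (hw i), mul_one]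
  rw [Finset.prod_congr rfl fun i _ => hdiag i, Finset.prod_mul_distrib, Finset.prod_const,
    Finset.card_univ]

end Vanishing

theorem q₂_ne_zero : q₂ ≠ 0 :=
  (map_ne_zero_iff _ (IsFractionRing.injective _ _)).mpr (MvPolynomial.X_ne_zero _)

theorem zz_ne_zero (i : ℕ) : zz i ≠ 0 :=
  (map_ne_zero_iff _ (IsFractionRing.injective _ _)).mpr (MvPolynomial.X_ne_zero _)

theorem q₂_mem_Lq : q₂ ∈ Lq := Subring.subset_closure (by simp)

theorem Lq_le_Lqx (k : ℕ) : Lq ≤ Lqx k := Subring.closure_mono fun _ hx => Or.inl (Or.inl hx)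

theorem zz_mem_Lqx {k : ℕ} (i : Fin k) : zz i ∈ Lqx k :=
  Subring.subset_closure (Or.inl (Or.inr ⟨i, rfl⟩))

theorem zz_inv_mem_Lqx {k : ℕ} (i : Fin k) : (zz i)⁻¹ ∈ Lqx k :=
  Subring.subset_closure (Or.inr ⟨i, rfl⟩)

theorem zz_zpow_mem_Lqx {k : ℕ} (i : Fin k) (m : ℤ) : zz i ^ m ∈ Lqx k := by
  cases m with
  | ofNat p => simpa using pow_mem (zz_mem_Lqx i) p
  | negSucc p => simpa [zpow_negSucc] using pow_mem (zz_inv_mem_Lqx i) (p + 1)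

theorem hasLqCoeffs_iff {n : ℕ} (f : AddMonoidAlgebra FF (Fin n → ℤ)) :
    HasLqCoeffs f.coeff ↔ f ∈ coeffSubring Lq := by
  refine ⟨fun h m => ?_, fun h m _ => h m⟩
  by_cases hm : m ∈ f.coeff.support
  · exact h m hm
  · rw [Finsupp.notMem_support_iff.mp hm]
    exact zero_mem Lq

theorem isSymmC_iff {n : ℕ} (f : AddMonoidAlgebra FF (Fin n → ℤ)) :
    IsSymmC f.coeff ↔ ∀ σ, domCongr FF FF (precompPerm σ) f = f := by
  refine ⟨fun h σ => ?_, fun h σ m => ?_⟩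
  · ext m
    rw [coeff_domCongr, precompPerm_symm_apply]
    exact h σ.symm m
  · conv_lhs => rw [← h σ]
    rw [coeff_domCongr, precompPerm_symm_apply, Function.comp_assoc, Equiv.self_comp_symm,
      Function.comp_id]

theorem evalC_mem_Lqx {n : ℕ} {f : AddMonoidAlgebra FF (Fin n → ℤ)} (hf : f ∈ coeffSubring Lq) :
    evalC f.coeff (fun j => zz j) ∈ Lqx n :=
  sum_mem fun m _ => mul_mem (Lq_le_Lqx n (hf m)) (prod_mem fun i _ => zz_zpow_mem_Lqx i _)

theorem evalC_mul_FPoly {n : ℕ} (f : AddMonoidAlgebra FF (Fin n → ℤ)) {w : Fin n → FF}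
    (hw : ∀ i, w i ≠ 0) :
    evalC (f * FPoly (Fin n) q₂).coeff w = evalC f.coeff w * ∏ i, ∏ j, (1 - q₂ * w i / w j) := by
  rw [evalC, evalC, ← laurentEval_apply w hw, ← laurentEval_apply w hw, map_mul, laurentEval_FPoly]

theorem mem_specTuple_list {k : ℕ} {nn : Fin k → ℕ} {x : FF} :
    x ∈ ((List.finRange k).flatMap fun i => (List.range (nn i)).map fun s => zz i * q₂ ^ s) ↔
      ∃ i, ∃ s < nn i, zz i * q₂ ^ s = x := by
  simp

theorem specTuple_ne_zero {n k : ℕ} (nn : Fin k → ℕ) (j : Fin n) : specTuple k nn j ≠ 0 := by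
  rw [specTuple, List.getD_eq_getElem?_getD]
  cases h : ((List.finRange k).flatMap fun i =>
      (List.range (nn i)).map fun s => zz i * q₂ ^ s)[(j : ℕ)]? with
  | none => exact one_ne_zero
  | some x =>
    obtain ⟨i, s, -, rfl⟩ := mem_specTuple_list.mp (List.mem_of_getElem? h)
    exact mul_ne_zero (zz_ne_zero i) (pow_ne_zero s q₂_ne_zero)

theorem exists_specTuple_eq {n k : ℕ} {nn : Fin k → ℕ} (hsum : ∑ i, nn i = n) {i : Fin k} {s : ℕ}
    (hs : s < nn i) : ∃ j : Fin n, specTuple k nn j = zz i * q₂ ^ s := by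
  obtain ⟨t, ht, hget⟩ := List.mem_iff_getElem.mp (mem_specTuple_list.mpr ⟨i, s, hs, rfl⟩)
  have hlen : t < n := by
    simpa [List.length_flatMap, ← List.ofFn_eq_map, List.sum_ofFn, ← hsum] using ht
  exact ⟨⟨t, hlen⟩, by rw [specTuple, List.getD_eq_getElem _ _ ht, hget]⟩

theorem specTuple_ones (n : ℕ) : specTuple (n := n) n (fun _ => 1) = fun j : Fin n => zz j := by
  have hlist : (List.finRange n).flatMap (fun i : Fin n => [zz i]) =
      (List.finRange n).map (fun i : Fin n => zz i) :=
    List.flatMap_pure_eq_map _ _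
  funext j
  simp [specTuple, hlist]

theorem divisor_ones (n : ℕ) : divisor n (fun _ => 1) = (1 - q₂) ^ n := by
  simp [divisor]

theorem satisfiesDiv_mul_FPoly {n : ℕ} {f : AddMonoidAlgebra FF (Fin n → ℤ)}
    (hf : f ∈ coeffSubring Lq) : SatisfiesDiv (f * FPoly (Fin n) q₂).coeff := by
  intro k nn hpos _ hsum
  rw [evalC_mul_FPoly f (specTuple_ne_zero nn)]
  by_cases hone : ∀ i, nn i = 1
  · obtain rfl : k = n := by simpa [hone] using hsum
    obtain rfl : nn = fun _ => 1 := funext hone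
    rw [specTuple_ones, divisor_ones, prod_prod_one_sub_eq (w := fun j : Fin k => zz j)
      fun i => zz_ne_zero i, Fintype.card_fin, mul_left_comm]
    refine ⟨_, mul_mem (evalC_mem_Lqx hf) (prod_mem fun i _ => prod_mem fun j _ => ?_), rfl⟩
    rw [div_eq_mul_inv]
    exact sub_mem (one_mem _)
      (mul_mem (mul_mem (Lq_le_Lqx k q₂_mem_Lq) (zz_mem_Lqx i)) (zz_inv_mem_Lqx j))
  · push Not at hone
    obtain ⟨i, hi⟩ := hone
    obtain ⟨a, ha⟩ := exists_specTuple_eq hsum (s := 0) (hpos i)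
    obtain ⟨b, hb⟩ := exists_specTuple_eq hsum (s := 1) (by have := hpos i; omega : 1 < nn i)
    refine ⟨0, zero_mem _, ?_⟩
    rw [prod_prod_one_sub_eq_zero (a := a) (b := b) (by rw [ha, hb]; ring)
      (mul_ne_zero q₂_ne_zero (specTuple_ne_zero nn a)), mul_zero, mul_zero]

theorem statement8 (n : ℕ) (cP : (Fin n → ℤ) →₀ FF)
    (hP : HasLqCoeffs cP) (hPsym : IsSymmC cP) :
    ∃ c : (Fin n → ℤ) →₀ FF, InS c ∧
      evalC c (fun i => zz i) =
        evalC cP (fun i => zz i) *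
          ∏ i : Fin n, ∏ j : Fin n, (1 - q₂ * zz i / zz j) := by
  set P : AddMonoidAlgebra FF (Fin n → ℤ) := ofCoeff cP
  have hPLq : P ∈ coeffSubring Lq := (hasLqCoeffs_iff P).mp hP
  have hPF : P * FPoly (Fin n) q₂ ∈ coeffSubring Lq :=
    mul_mem hPLq (FPoly_mem_coeffSubring q₂_mem_Lq)
  have hPFsym : ∀ σ, domCongr FF FF (precompPerm σ) (P * FPoly (Fin n) q₂) = P * FPoly (Fin n) q₂ :=
    fun σ => by rw [map_mul, domCongr_FPoly, (isSymmC_iff P).mp hPsym σ]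
  exact ⟨(P * FPoly (Fin n) q₂).coeff,
    ⟨(hasLqCoeffs_iff _).mpr hPF, (isSymmC_iff _).mpr hPFsym, satisfiesDiv_mul_FPoly hPLq⟩,
    evalC_mul_FPoly P fun i => zz_ne_zero i⟩

end
end

section
/- The product over 1 ≤ i < j ≤ k of [∏_{a=1}^{n_i-1} ∏_{b=0}^{n_j-1} (x_i q₁ - x_j q₂^{b-a})] · [∏_{a=1}^{n_i-1} ∏_{b=0}^{n_j-1} (x_j q₁ - x_i q₂^{a-b-1})] equals, up to multiplication by a unit monomial in the x's and q₂, the symmetric expression ∏_{1≤i≠j≤k} ∏_{a=min(n_i-n_j,0)+1}^{n_i-1} ∏_{b=0}^{min(n_i,n_j)-1} (x_i q₁ - x_j q₂^{b-a}), for any positive integers n₁ ≥ … ≥ n_k. -/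
/- STATEMENT 10: for positive integers n₁ ≥ … ≥ n_k, in the Laurent polynomial
ring ℤ[q₁^{±1},q₂^{±1}][x₁^{±1},…,x_k^{±1}] (realized inside the field of
rational functions in the variables q₁, q₂, x₁, …, x_k), the product
∏_{i<j} [∏_{a=1}^{n_i-1} ∏_{b=0}^{n_j-1} (x_i q₁ - x_j q₂^{b-a})]
        [∏_{a=1}^{n_i-1} ∏_{b=0}^{n_j-1} (x_j q₁ - x_i q₂^{a-b-1})]
equals, up to multiplication by ± a monomial in q₁, q₂ and the x's,
∏_{i≠j} ∏_{a=min(n_i-n_j,0)+1}^{n_i-1} ∏_{b=0}^{min(n_i,n_j)-1} (x_i q₁ - x_j q₂^{b-a}). -/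

noncomputable section

noncomputable def xx (i : ℕ) : FF := algebraMap (MvPolynomial ℕ ℤ) FF (MvPolynomial.X (i + 2))

lemma reflect10 (m n : ℤ) (u v : FF) :
    (∏ a ∈ Finset.Icc (1:ℤ) (m-1), ∏ b ∈ Finset.Icc (0:ℤ) (n-1), (u - v * q₂ ^ (a - b - 1)))
    = ∏ a ∈ Finset.Icc (n-m+1) (n-1), ∏ b ∈ Finset.Icc (0:ℤ) (n-1), (u - v * q₂ ^ (b - a)) := by
  refine Finset.prod_nbij' (fun a => n - a) (fun a => n - a) ?_ ?_ ?_ ?_ ?_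
  · intro a ha; simp only [Finset.mem_Icc] at *; omega
  · intro a ha; simp only [Finset.mem_Icc] at *; omega
  · intro a _; ring
  · intro a _; ring
  · intro a _
    refine Finset.prod_nbij' (fun b => n - 1 - b) (fun b => n - 1 - b) ?_ ?_ ?_ ?_ ?_
    · intro b hb; simp only [Finset.mem_Icc] at *; omega
    · intro b hb; simp only [Finset.mem_Icc] at *; omega
    · intro b _; ring
    · intro b _; ring
    · intro b _
      have h : a - b - 1 = (n - 1 - b) - (n - a) := by ring
      rw [h]

lemma pairprod10 {M : Type*} [CommMonoid M] (k : ℕ) (f : Fin k → Fin k → M) :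
    (∏ i : Fin k, ∏ j ∈ Finset.univ.filter (fun j : Fin k => i < j), (f i j * f j i))
      = ∏ i : Fin k, ∏ j ∈ Finset.univ.filter (fun j : Fin k => j ≠ i), f i j := by
  have hsplit : ∀ i : Fin k, (Finset.univ.filter (fun j : Fin k => j ≠ i))
      = (Finset.univ.filter (fun j : Fin k => i < j)) ∪ (Finset.univ.filter (fun j : Fin k => j < i)) := by
    intro i; ext j
    simp only [Finset.mem_filter, Finset.mem_union, Finset.mem_univ, true_and]
    omega
  have hdisj : ∀ i : Fin k, Disjoint (Finset.univ.filter (fun j : Fin k => i < j))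
      (Finset.univ.filter (fun j : Fin k => j < i)) := by
    intro i
    rw [Finset.disjoint_left]
    intro j hj hj'
    simp only [Finset.mem_filter, Finset.mem_univ, true_and] at hj hj'
    omega
  calc (∏ i : Fin k, ∏ j ∈ Finset.univ.filter (fun j : Fin k => i < j), (f i j * f j i))
      = (∏ i : Fin k, ∏ j ∈ Finset.univ.filter (fun j : Fin k => i < j), f i j) *
        (∏ i : Fin k, ∏ j ∈ Finset.univ.filter (fun j : Fin k => i < j), f j i) := by
        rw [← Finset.prod_mul_distrib]
        exact Finset.prod_congr rfl fun i _ => Finset.prod_mul_distrib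
    _ = (∏ i : Fin k, ∏ j ∈ Finset.univ.filter (fun j : Fin k => i < j), f i j) *
        (∏ i : Fin k, ∏ j ∈ Finset.univ.filter (fun j : Fin k => j < i), f i j) := by
        congr 1
        refine Finset.prod_comm' ?_
        intro x y
        simp only [Finset.mem_filter, Finset.mem_univ, true_and, and_iff_right_iff_imp]
        tauto
    _ = _ := by
        rw [← Finset.prod_mul_distrib]
        refine Finset.prod_congr rfl fun i _ => ?_
        rw [hsplit i, Finset.prod_union (hdisj i)]

theorem statement10 (k : ℕ) (nn : Fin k → ℕ)
    (hpos : ∀ i, 0 < nn i) (hanti : Antitone nn) :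
    ∃ (s : ℤ) (e₁ e₂ : ℤ) (γ : Fin k → ℤ), (s = 1 ∨ s = -1) ∧
      (∏ i : Fin k, ∏ j ∈ Finset.univ.filter (fun j : Fin k => i < j),
          ((∏ a ∈ Finset.Icc (1 : ℤ) ((nn i : ℤ) - 1), ∏ b ∈ Finset.Icc (0 : ℤ) ((nn j : ℤ) - 1),
              (xx i * q₁ - xx j * q₂ ^ (b - a))) *
           (∏ a ∈ Finset.Icc (1 : ℤ) ((nn i : ℤ) - 1), ∏ b ∈ Finset.Icc (0 : ℤ) ((nn j : ℤ) - 1),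
              (xx j * q₁ - xx i * q₂ ^ (a - b - 1)))))
      = (s : FF) * q₁ ^ e₁ * q₂ ^ e₂ * (∏ i : Fin k, xx i ^ γ i) *
        ∏ i : Fin k, ∏ j ∈ Finset.univ.filter (fun j : Fin k => j ≠ i),
          ∏ a ∈ Finset.Icc (min ((nn i : ℤ) - (nn j : ℤ)) 0 + 1) ((nn i : ℤ) - 1),
            ∏ b ∈ Finset.Icc (0 : ℤ) (min (nn i : ℤ) (nn j : ℤ) - 1),
              (xx i * q₁ - xx j * q₂ ^ (b - a)) := by
  refine ⟨1, 0, 0, fun _ => 0, Or.inl rfl, ?_⟩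
  simp only [Int.cast_one, zpow_zero, one_mul, mul_one, Finset.prod_const_one]
  rw [← pairprod10 k (fun i j =>
      ∏ a ∈ Finset.Icc (min ((nn i : ℤ) - (nn j : ℤ)) 0 + 1) ((nn i : ℤ) - 1),
        ∏ b ∈ Finset.Icc (0 : ℤ) (min (nn i : ℤ) (nn j : ℤ) - 1),
          (xx i * q₁ - xx j * q₂ ^ (b - a)))]
  refine Finset.prod_congr rfl fun i _ => Finset.prod_congr rfl fun j hj => ?_
  simp only [Finset.mem_filter, Finset.mem_univ, true_and] at hj
  have hle : (nn j : ℤ) ≤ (nn i : ℤ) := by exact_mod_cast hanti hj.le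
  have h1 : min ((nn i : ℤ) - (nn j : ℤ)) 0 = 0 := min_eq_right (by omega)
  have h2 : min ((nn i : ℤ)) ((nn j : ℤ)) = (nn j : ℤ) := min_eq_right hle
  have h3 : min ((nn j : ℤ) - (nn i : ℤ)) 0 = (nn j : ℤ) - (nn i : ℤ) := min_eq_left (by omega)
  have h4 : min ((nn j : ℤ)) ((nn i : ℤ)) = (nn j : ℤ) := min_eq_left hle
  simp only [h1, h2, h3, h4, zero_add]
  congr 1
  rw [reflect10 ((nn i : ℤ)) ((nn j : ℤ)) (xx j * q₁) (xx i)]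

end
end

section
/- The symmetrization H_{n,d} = Sym[ ∏_{i=1}^n z_i^{⌊id/n⌋-⌊(i-1)d/n⌋} / ∏_{i=1}^{n-1}(1 - z_{i+1}/(z_i q₂)) · ∏_{1≤i<j≤n} ζ(z_i/z_j) ] is a symmetric Laurent polynomial (i.e., all apparent poles at z_{i+1} = q₂ z_i and z_i = z_j cancel after symmetrization) with coefficients in ℤ[q₁^{±1}, q₂^{±1}], for all (n,d) ∈ ℕ × ℤ with n ≥ 1. -/
/- Framework: we work inside the field FF of rational functions over ℤ in
countably many variables q₁, q₂, z₀, z₁, z₂, … (the fraction field of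
MvPolynomial ℕ ℤ).  A Laurent polynomial R(z₁,…,z_n) over ℤ[q₁^±,q₂^±] is
encoded by its finitely supported coefficient function
c : (Fin n → ℤ) →₀ FF (with values in the Laurent subring ℤ[q₁^±,q₂^±]),
and `evalC c w` is its value ∑_m c_m ∏ w_i^{m_i} at a point w.  Since the z_i
are algebraically independent, equalities of such expressions at the generic
point w = (z₀,…,z_{n-1}) are equalities of rational functions. -/

noncomputable section

/- STATEMENT 13: for n ≥ 1 and d ∈ ℤ, the symmetrization
H_{n,d} = Sym[ ∏_i z_i^{⌊id/n⌋-⌊(i-1)d/n⌋} / ∏_{i=1}^{n-1}(1 - z_{i+1}/(z_iq₂))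
              · ∏_{i<j} ζ(z_i/z_j) ]
(Sym = sum over all permutations of the variables) is a symmetric Laurent
polynomial with coefficients in ℤ[q₁^{±1},q₂^{±1}]: there is coefficient data
c with coefficients in ℤ[q₁^±,q₂^±], symmetric, whose value at the generic
point equals the symmetrized rational expression. -/

/-- the variables z_{σ(1)}, …, z_{σ(n)} (0-indexed), as a function on ℕ. -/
noncomputable def vv (n : ℕ) (σ : Equiv.Perm (Fin n)) (i : ℕ) : FF :=
  if h : i < n then zz (σ ⟨i, h⟩) else 1

/-- the symmetrization defining H_{n,d}, as a rational function (an element of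
the field FF, in the generic variables z₀,…,z_{n-1}). -/
noncomputable def symH (n : ℕ) (d : ℤ) : FF :=
  ∑ σ : Equiv.Perm (Fin n),
    (∏ i ∈ Finset.range n,
        vv n σ i ^ (Int.fdiv (((i : ℤ) + 1) * d) n - Int.fdiv ((i : ℤ) * d) n)) /
      (∏ i ∈ Finset.range (n - 1), (1 - vv n σ (i + 1) / (vv n σ i * q₂))) *
    ∏ i ∈ Finset.range n, ∏ j ∈ Finset.range n,
      (if i < j then zeta (vv n σ i / vv n σ j) else 1)

/-! Clearing denominators, every summand of the symmetrization is
`(z₁⋯zₙ)^(-K) · N(z_σ) / V(z_σ)` for a single polynomial `N` over `ℤ[q₁^±, q₂^±]`,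
where `V = ∏_{i<j} (z_j - z_i)`: the factor `1 - z_{i+1}/(z_i q₂)` of the denominator cancels
against the factor `z_{i+1} - q₂ z_i` in the numerator of `ζ(z_i/z_{i+1})`, and all other
denominators are powers of the symmetric monomial `z₁⋯zₙ`. As `V(z_σ) = sign σ · V(z)`, the
symmetrization is `(z₁⋯zₙ)^(-K) · A(N) / V` with `A(N) = ∑_σ sign σ · σN` alternating. An
alternating polynomial vanishes under `z_i ↦ z_j`, so it is divisible by the pairwise
non-associate primes `z_j - z_i`, hence by `V`, and the quotient is symmetric. -/

open Finset MvPolynomial Equiv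

theorem Finset.prod_dvd_of_prime_of_not_dvd {ι α : Type*} [CommMonoidWithZero α] [DecidableEq ι]
    {s : Finset ι} {f : ι → α} {a : α} (hprime : ∀ i ∈ s, Prime (f i))
    (hndvd : ∀ i ∈ s, ∀ j ∈ s, i ≠ j → ¬ f i ∣ f j) (hdvd : ∀ i ∈ s, f i ∣ a) :
    ∏ i ∈ s, f i ∣ a := by
  induction s using Finset.induction_on generalizing a with
  | empty => simp
  | insert k s hk ih =>
    obtain ⟨b, rfl⟩ := hdvd k (mem_insert_self k s)
    rw [prod_insert hk]
    refine mul_dvd_mul_left _ (ih (fun i hi => hprime i (mem_insert_of_mem hi))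
      (fun i hi j hj => hndvd i (mem_insert_of_mem hi) j (mem_insert_of_mem hj)) fun i hi => ?_)
    have hik : i ≠ k := fun h => hk (h ▸ hi)
    exact ((hprime i (mem_insert_of_mem hi)).dvd_or_dvd
      (hdvd i (mem_insert_of_mem hi))).resolve_left
        (hndvd i (mem_insert_of_mem hi) k (mem_insert_self k s) hik)

namespace MvPolynomial

section Substitution

variable {σ R : Type*} [CommRing R] [DecidableEq σ]

theorem X_sub_X_dvd_sub_rename_update (i j : σ) (P : MvPolynomial σ R) :
    X j - X i ∣ P - rename (Function.update id i j) P := by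
  induction P using MvPolynomial.induction_on with
  | C a => simp
  | add p q hp hq => simpa only [map_add, add_sub_add_comm] using dvd_add hp hq
  | mul_X p k hp =>
    have hsplit : p * X k - rename (Function.update id i j) (p * X k) =
        (p - rename (Function.update id i j) p) * X k +
          rename (Function.update id i j) p * (X k - X (Function.update id i j k)) := by
      rw [map_mul, rename_X]; ring
    rw [hsplit]
    refine dvd_add (hp.mul_right _) (Dvd.dvd.mul_left ?_ _)
    rcases eq_or_ne k i with rfl | hk
    · rw [Function.update_self]
      exact dvd_sub_comm.mp dvd_rfl
    · simp [Function.update_of_ne hk]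

theorem prime_X_sub_X [IsDomain R] {i j : σ} (hij : i ≠ j) :
    Prime (X j - X i : MvPolynomial σ R) := by
  have hne : (X j - X i : MvPolynomial σ R) ≠ 0 := sub_ne_zero.2 fun h => hij (X_injective h).symm
  have hker : Ideal.span {(X j - X i : MvPolynomial σ R)} =
      RingHom.ker (rename (R := R) (Function.update id i j)) := by
    ext P
    rw [Ideal.mem_span_singleton, RingHom.mem_ker]
    constructor
    · rintro ⟨c, rfl⟩
      simp [Function.update_of_ne hij.symm]
    · intro h
      simpa [h] using X_sub_X_dvd_sub_rename_update i j P
  rw [← Ideal.span_singleton_prime hne, hker]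
  exact RingHom.ker_isPrime _

theorem rename_update_eq_zero_of_rename_swap [IsDomain R] [CharZero R] {i j : σ}
    {f : MvPolynomial σ R} (hf : rename (swap i j) f = -f) :
    rename (Function.update id i j) f = 0 := by
  have hcomp : Function.update id i j ∘ swap i j = Function.update id i j := by
    funext k
    simp only [Function.comp_apply, Function.update_apply, swap_apply_def, id]
    split_ifs <;> simp_all
  have h := congrArg (rename (R := R) (Function.update id i j)) hf
  rw [rename_rename, hcomp, map_neg] at h
  exact self_eq_neg.1 h

end Substitution

section Vandermonde

def vandermondeProd (n : ℕ) (R : Type*) [CommRing R] : MvPolynomial (Fin n) R :=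
  ∏ i : Fin n, ∏ j ∈ Ioi i, (X j - X i)

variable {R : Type*} [CommRing R] {n : ℕ}

theorem rename_vandermondeProd (τ : Perm (Fin n)) :
    rename τ (vandermondeProd n R) = Perm.sign τ • vandermondeProd n R := by
  have hdet : vandermondeProd n R =
      (Matrix.vandermonde fun i : Fin n => (X i : MvPolynomial (Fin n) R)).det :=
    (Matrix.det_vandermonde _).symm
  rw [hdet, AlgHom.map_det, Units.smul_def, zsmul_eq_mul, ← Matrix.det_permute]
  congr 1
  ext i j
  simp [Matrix.vandermonde]

theorem vandermondeProd_ne_zero [IsDomain R] : vandermondeProd n R ≠ 0 :=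
  prod_ne_zero_iff.2 fun _ _ => prod_ne_zero_iff.2 fun _ hj =>
    sub_ne_zero.2 fun h => (mem_Ioi.1 hj).ne' (X_injective h)

theorem vandermondeProd_dvd [IsDomain R] [CharZero R] {f : MvPolynomial (Fin n) R}
    (hf : ∀ i j, i ≠ j → rename (swap i j) f = -f) : vandermondeProd n R ∣ f := by
  rw [vandermondeProd, prod_sigma']
  refine prod_dvd_of_prime_of_not_dvd (fun p hp => prime_X_sub_X (mem_Ioi.1 (mem_sigma.1 hp).2).ne)
    ?_ fun p hp => ?_
  · rintro ⟨i, j⟩ hij ⟨k, l⟩ hkl hne ⟨c, hc⟩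
    simp only [mem_sigma, mem_univ, mem_Ioi, true_and] at hij hkl
    have h := congrArg (rename (R := R) (Function.update id i j)) hc
    simp only [map_mul, map_sub, rename_X, Function.update_self, Function.update_of_ne hij.ne', id,
      sub_self, zero_mul, sub_eq_zero] at h
    -- `X_i ↦ X_j` kills `X_l - X_k` only if `(k, l) = (i, j)`
    have h' := X_injective h
    simp only [Function.update_apply, id] at h'
    apply hne
    split_ifs at h' <;> subst_vars <;> first | rfl | omega
  · have h := X_sub_X_dvd_sub_rename_update p.1 p.2 f
    rwa [rename_update_eq_zero_of_rename_swap (hf _ _ (mem_Ioi.1 (mem_sigma.1 hp).2).ne),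
      sub_zero] at h

def alternant (P : MvPolynomial (Fin n) R) : MvPolynomial (Fin n) R :=
  ∑ σ : Perm (Fin n), Perm.sign σ • rename σ P

theorem rename_alternant (τ : Perm (Fin n)) (P : MvPolynomial (Fin n) R) :
    rename τ (alternant P) = Perm.sign τ • alternant P := by
  simp only [alternant, map_sum, smul_sum, map_zsmul_unit, rename_rename]
  refine Fintype.sum_equiv (Equiv.mulLeft τ) _ _ fun σ => ?_
  rw [coe_mulLeft, Perm.sign_mul, mul_smul, smul_smul, Int.units_mul_self, one_smul]
  rfl

theorem exists_isSymmetric_alternant_eq_vandermondeProd_mul [IsDomain R] [CharZero R]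
    (P : MvPolynomial (Fin n) R) :
    ∃ h : MvPolynomial (Fin n) R, h.IsSymmetric ∧ alternant P = vandermondeProd n R * h := by
  obtain ⟨h, hh⟩ := vandermondeProd_dvd (f := alternant P) fun i j hij => by
    rw [rename_alternant, Perm.sign_swap hij, Units.neg_smul, one_smul]
  refine ⟨h, fun τ => ?_, hh⟩
  have h' := rename_alternant τ P
  rw [hh, map_mul, rename_vandermondeProd, smul_mul_assoc] at h'
  exact mul_left_cancel₀ vandermondeProd_ne_zero (MulAction.injective (Perm.sign τ) h')

end Vandermonde

end MvPolynomial

namespace Shuffle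

section LaurentCoeffs

variable {n : ℕ} {S : Subring FF}

def laurentShift (k : ℤ) (d : Fin n →₀ ℕ) : Fin n → ℤ := fun i => d i + k

theorem laurentShift_injective (k : ℤ) : Function.Injective (laurentShift (n := n) k) :=
  fun d d' h => Finsupp.ext fun i => by simpa [laurentShift] using congrFun h i

theorem laurentShift_comp_perm (k : ℤ) (d : Fin n →₀ ℕ) (σ : Perm (Fin n)) :
    laurentShift k d ∘ σ = laurentShift k (d.mapDomain σ.symm) := by
  funext i
  simp [laurentShift, Finsupp.mapDomain_equiv_apply]

variable (S) in
def laurentCoeffs (k : ℤ) (P : MvPolynomial (Fin n) S) : (Fin n → ℤ) →₀ FF :=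
  (Finsupp.mapRange ((↑) : S → FF) rfl (AddMonoidAlgebra.coeff P)).mapDomain (laurentShift k)

theorem laurentCoeffs_laurentShift (k : ℤ) (P : MvPolynomial (Fin n) S) (d : Fin n →₀ ℕ) :
    laurentCoeffs S k P (laurentShift k d) = P.coeff d := by
  rw [laurentCoeffs, Finsupp.mapDomain_apply (laurentShift_injective k), Finsupp.mapRange_apply]
  rfl

theorem laurentCoeffs_of_notMem_range {k : ℤ} (P : MvPolynomial (Fin n) S) {m : Fin n → ℤ}
    (hm : m ∉ Set.range (laurentShift k)) : laurentCoeffs S k P m = 0 :=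
  Finsupp.mapDomain_of_notMem_range _ _ hm

theorem laurentCoeffs_mem (k : ℤ) (P : MvPolynomial (Fin n) S) (m : Fin n → ℤ) :
    laurentCoeffs S k P m ∈ S := by
  by_cases hm : m ∈ Set.range (laurentShift k)
  · obtain ⟨d, rfl⟩ := hm
    rw [laurentCoeffs_laurentShift]
    exact (P.coeff d).2
  · rw [laurentCoeffs_of_notMem_range P hm]
    exact S.zero_mem

theorem laurentCoeffs_comp_perm (k : ℤ) {P : MvPolynomial (Fin n) S} (hP : P.IsSymmetric)
    (σ : Perm (Fin n)) (m : Fin n → ℤ) :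
    laurentCoeffs S k P (m ∘ σ) = laurentCoeffs S k P m := by
  have key : ∀ (σ : Perm (Fin n)) (d : Fin n →₀ ℕ),
      laurentCoeffs S k P (laurentShift k d ∘ σ) = laurentCoeffs S k P (laurentShift k d) := by
    intro σ d
    have h := coeff_rename_mapDomain _ σ.symm.injective P d
    rw [hP σ.symm] at h
    rw [laurentShift_comp_perm, laurentCoeffs_laurentShift, laurentCoeffs_laurentShift, h]
  by_cases hm : m ∈ Set.range (laurentShift k)
  · obtain ⟨d, rfl⟩ := hm
    exact key σ d
  by_cases hmσ : m ∘ σ ∈ Set.range (laurentShift k)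
  · obtain ⟨d, hd⟩ := hmσ
    have h := key σ⁻¹ d
    have hm' : (m ∘ σ) ∘ ⇑σ⁻¹ = m := by
      funext i
      simp
    rw [hd, hm'] at h
    exact h.symm
  · rw [laurentCoeffs_of_notMem_range P hm, laurentCoeffs_of_notMem_range P hmσ]

theorem evalC_laurentCoeffs (k : ℤ) (P : MvPolynomial (Fin n) S) {w : Fin n → FF}
    (hw : ∀ i, w i ≠ 0) :
    evalC (laurentCoeffs S k P) w = (∏ i, w i) ^ k * eval₂ S.subtype w P := by
  have hsum : evalC (laurentCoeffs S k P) w =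
      (laurentCoeffs S k P).sum fun m a => a * ∏ i, w i ^ m i := rfl
  rw [hsum, laurentCoeffs, Finsupp.sum_mapDomain_index_inj (laurentShift_injective k),
    Finsupp.sum_mapRange_index (fun _ => zero_mul _), sum_def, eval₂_eq', mul_sum]
  refine sum_congr rfl fun d _ => ?_
  simp only [laurentShift, zpow_add₀ (hw _), prod_mul_distrib, prod_zpow, zpow_natCast]
  rw [Subring.coe_subtype, coeff]
  ring

end LaurentCoeffs

section Pairs

def pairs (n : ℕ) : Finset (ℕ × ℕ) := (range n ×ˢ range n).filter fun p => p.1 < p.2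

variable {M : Type*} [CommMonoid M] {n : ℕ}

theorem prod_pairs (f : ℕ → ℕ → M) :
    ∏ p ∈ pairs n, f p.1 p.2 = ∏ i ∈ range n, ∏ j ∈ range n, if i < j then f i j else 1 := by
  rw [pairs, prod_filter, prod_product]

theorem prod_pairs_eq_prod_Ioi (f : ℕ → ℕ → M) :
    ∏ p ∈ pairs n, f p.1 p.2 = ∏ i : Fin n, ∏ j ∈ Ioi i, f i j := by
  rw [prod_pairs, ← Fin.prod_univ_eq_prod_range]
  refine prod_congr rfl fun i _ => ?_
  rw [← Fin.prod_univ_eq_prod_range (fun j => if (i : ℕ) < j then f i j else 1), ← filter_lt_eq_Ioi,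
    prod_filter]
  rfl

theorem prod_pairs_split (f : ℕ × ℕ → M) :
    ∏ p ∈ pairs n, f p =
      (∏ t ∈ range (n - 1), f (t, t + 1)) *
        ∏ p ∈ (pairs n).filter (fun p => p.2 ≠ p.1 + 1), f p := by
  rw [← prod_filter_mul_prod_filter_not (pairs n) (fun p => p.2 = p.1 + 1)]
  have hadj : (pairs n).filter (fun p => p.2 = p.1 + 1) =
      (range (n - 1)).image fun t => (t, t + 1) := by
    ext ⟨a, b⟩
    simp only [pairs, mem_filter, mem_product, mem_range, mem_image, Prod.mk.injEq]
    constructor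
    · rintro ⟨⟨ha, hb⟩, hab, rfl⟩
      exact ⟨a, by omega, rfl, rfl⟩
    · rintro ⟨t, ht, rfl, rfl⟩
      omega
  rw [hadj, prod_image fun x _ y _ h => (Prod.mk.inj h).1]

theorem prod_pairs_mul (v : ℕ → M) :
    ∏ p ∈ pairs n, (v p.1 * v p.2) = (∏ i ∈ range n, v i) ^ (n - 1) := by
  have hswap : (∏ i ∈ range n, ∏ j ∈ range n, if i < j then v j else 1) =
      ∏ i ∈ range n, ∏ j ∈ range n, if j < i then v i else 1 := prod_comm
  rw [prod_mul_distrib, prod_pairs (fun i _ => v i), prod_pairs (fun _ j => v j), hswap,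
    ← prod_mul_distrib, ← prod_pow]
  refine prod_congr rfl fun i hi => ?_
  have hne : ∀ j,
      (if i < j then v i else 1) * (if j < i then v i else 1) = if j ≠ i then v i else 1 := by
    intro j
    rcases lt_trichotomy i j with h | rfl | h
    · simp [h, h.ne', h.not_gt]
    · simp
    · simp [h, h.ne, h.not_gt]
  rw [← prod_mul_distrib, prod_congr rfl fun j _ => hne j, ← prod_filter, filter_ne', prod_const,
    card_erase_of_mem hi, card_range]

end Pairs

section GenericPoint

theorem algebraMap_ne_zero_of_eval_ne_zero {p : MvPolynomial ℕ ℤ} (f : ℕ → ℤ) (h : eval f p ≠ 0) :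
    algebraMap (MvPolynomial ℕ ℤ) FF p ≠ 0 := by
  rw [ne_eq, IsFractionRing.to_map_eq_zero_iff]
  rintro rfl
  simp at h

theorem zz_ne_zero (i : ℕ) : zz i ≠ 0 :=
  algebraMap_ne_zero_of_eval_ne_zero (fun _ => 1) (by simp)

theorem q₂_ne_zero : q₂ ≠ 0 :=
  algebraMap_ne_zero_of_eval_ne_zero (fun _ => 1) (by simp)

theorem zz_sub_zz_ne_zero {i j : ℕ} (hij : i ≠ j) : zz j - zz i ≠ 0 := by
  have h : zz j - zz i = algebraMap (MvPolynomial ℕ ℤ) FF (X (j + 2) - X (i + 2)) := by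
    simp [zz]
  rw [h]
  exact algebraMap_ne_zero_of_eval_ne_zero (fun k => if k = j + 2 then 1 else 0) (by simp [hij])

theorem zz_sub_q₂_mul_zz_ne_zero (i j : ℕ) : zz j - q₂ * zz i ≠ 0 := by
  have h : zz j - q₂ * zz i = algebraMap (MvPolynomial ℕ ℤ) FF (X (j + 2) - X 1 * X (i + 2)) := by
    simp [zz, q₂]
  rw [h]
  exact algebraMap_ne_zero_of_eval_ne_zero (fun k => if k = j + 2 then 1 else 0) (by simp)

theorem zeta_div {a b : FF} (ha : a ≠ 0) (hb : b ≠ 0) (hab : b - a ≠ 0) :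
    zeta (a / b) = (b - q₁ * a) * (b - q₂ * a) * (a - q₁ * q₂ * b) / (a * b * (b - a)) := by
  rw [zeta, one_sub_div hb]
  field_simp

end GenericPoint

section Term

def pairDiff (n : ℕ) {A : Type*} [CommRing A] (v : ℕ → A) : A :=
  ∏ p ∈ pairs n, (v p.2 - v p.1)

def symTermNumer (n : ℕ) (e : ℕ → ℕ) {A : Type*} [CommRing A] (a b : A) (v : ℕ → A) :
    A :=
  (∏ t ∈ range (n - 1), (-b * v t)) * (∏ i ∈ range n, v i ^ e i) *
    (∏ p ∈ pairs n, ((v p.2 - a * v p.1) * (v p.1 - a * b * v p.2))) *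
    ∏ p ∈ (pairs n).filter (fun p => p.2 ≠ p.1 + 1), (v p.2 - b * v p.1)

def symTerm (n : ℕ) (m : ℕ → ℤ) (v : ℕ → FF) : FF :=
  (∏ i ∈ range n, v i ^ m i) / (∏ i ∈ range (n - 1), (1 - v (i + 1) / (v i * q₂))) *
    ∏ i ∈ range n, ∏ j ∈ range n, (if i < j then zeta (v i / v j) else 1)

def expShift (n : ℕ) (m : ℕ → ℤ) : ℕ := ∑ i ∈ range n, (m i).natAbs

variable {n : ℕ}

theorem map_pairDiff {A B : Type*} [CommRing A] [CommRing B] (φ : A →+* B) (v : ℕ → A) :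
    φ (pairDiff n v) = pairDiff n (φ ∘ v) := by
  simp [pairDiff, map_prod]

theorem map_symTermNumer {A B : Type*} [CommRing A] [CommRing B] (φ : A →+* B) (e : ℕ → ℕ)
    (a b : A) (v : ℕ → A) : φ (symTermNumer n e a b v) = symTermNumer n e (φ a) (φ b) (φ ∘ v) := by
  simp [symTermNumer, map_prod]

variable {m : ℕ → ℤ} {v : ℕ → FF}

theorem prod_zpow_eq_mul_prod_pow (hv : ∀ i < n, v i ≠ 0) :
    ∏ i ∈ range n, v i ^ m i = (∏ i ∈ range n, v i) ^ (-(expShift n m : ℤ)) *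
      ∏ i ∈ range n, v i ^ (m i + expShift n m).toNat := by
  rw [← prod_zpow, ← prod_mul_distrib]
  refine prod_congr rfl fun i hi => ?_
  have hle : (m i).natAbs ≤ expShift n m :=
    single_le_sum (f := fun i => (m i).natAbs) (fun _ _ => Nat.zero_le _) hi
  have hnonneg : 0 ≤ m i + expShift n m := by omega
  rw [← zpow_natCast, Int.toNat_of_nonneg hnonneg, ← zpow_add₀ (hv i (mem_range.1 hi))]
  ring_nf

theorem prod_one_sub_div (hv : ∀ i < n, v i ≠ 0) :
    ∏ t ∈ range (n - 1), (1 - v (t + 1) / (v t * q₂)) =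
      (∏ t ∈ range (n - 1), (v (t + 1) - q₂ * v t)) / ∏ t ∈ range (n - 1), (-q₂ * v t) := by
  rw [← prod_div_distrib]
  refine prod_congr rfl fun t ht => ?_
  have := hv t (by simp at ht; omega)
  have := q₂_ne_zero
  field_simp
  ring

theorem prod_zeta (hv : ∀ i < n, v i ≠ 0) (hdiff : ∀ i j, i < j → j < n → v j - v i ≠ 0) :
    ∏ i ∈ range n, ∏ j ∈ range n, (if i < j then zeta (v i / v j) else 1) =
      (∏ p ∈ pairs n, (v p.2 - q₁ * v p.1) * (v p.2 - q₂ * v p.1) * (v p.1 - q₁ * q₂ * v p.2)) /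
        ((∏ i ∈ range n, v i) ^ (n - 1) * pairDiff n v) := by
  rw [← prod_pairs (fun i j => zeta (v i / v j)), pairDiff, ← prod_pairs_mul, ← prod_mul_distrib,
    ← prod_div_distrib]
  refine prod_congr rfl fun p hp => ?_
  simp only [pairs, mem_filter, mem_product, mem_range] at hp
  exact zeta_div (hv _ hp.1.1) (hv _ hp.1.2) (hdiff _ _ hp.2 hp.1.2)

theorem symTerm_mul_pairDiff (hv : ∀ i < n, v i ≠ 0)
    (hdiff : ∀ i j, i < j → j < n → v j - v i ≠ 0)
    (hchain : ∀ t, t + 1 < n → v (t + 1) - q₂ * v t ≠ 0) :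
    symTerm n m v * pairDiff n v =
      (∏ i ∈ range n, v i) ^ (-((expShift n m + (n - 1) : ℕ) : ℤ)) *
        symTermNumer n (fun i => (m i + expShift n m).toNat) q₁ q₂ v := by
  have hP : ∏ i ∈ range n, v i ≠ 0 := prod_ne_zero_iff.2 fun i hi => hv i (mem_range.1 hi)
  have hV : pairDiff n v ≠ 0 := prod_ne_zero_iff.2 fun p hp => by
    simp only [pairs, mem_filter, mem_product, mem_range] at hp
    exact hdiff _ _ hp.2 hp.1.2
  have hC : ∏ t ∈ range (n - 1), (v (t + 1) - q₂ * v t) ≠ 0 :=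
    prod_ne_zero_iff.2 fun t ht => hchain t (by simp at ht; omega)
  have hsplit : ∏ p ∈ pairs n,
      (v p.2 - q₁ * v p.1) * (v p.2 - q₂ * v p.1) * (v p.1 - q₁ * q₂ * v p.2) =
      (∏ p ∈ pairs n, ((v p.2 - q₁ * v p.1) * (v p.1 - q₁ * q₂ * v p.2))) *
        ((∏ t ∈ range (n - 1), (v (t + 1) - q₂ * v t)) *
          ∏ p ∈ (pairs n).filter (fun p => p.2 ≠ p.1 + 1), (v p.2 - q₂ * v p.1)) := by
    rw [← prod_pairs_split (fun p => v p.2 - q₂ * v p.1), ← prod_mul_distrib]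
    exact prod_congr rfl fun _ _ => by ring
  rw [symTerm, prod_zpow_eq_mul_prod_pow hv, prod_one_sub_div hv, prod_zeta hv hdiff, hsplit,
    symTermNumer, Nat.cast_add, neg_add, zpow_add₀ hP, zpow_neg, zpow_neg, zpow_natCast,
    zpow_natCast]
  -- stated for atoms `P, …, V`, so that `field_simp` does not normalize inside the products
  have hfield : ∀ P E C S A B V : FF, P ≠ 0 → C ≠ 0 → V ≠ 0 →
      (P ^ expShift n m)⁻¹ * E / (C / S) * (A * (C * B) / (P ^ (n - 1) * V)) * V =
        (P ^ expShift n m)⁻¹ * (P ^ (n - 1))⁻¹ * (S * E * A * B) := by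
    intro P E C S A B V hP hC hV
    field_simp
  exact hfield _ _ _ _ _ _ _ hP hC hV

end Term

section Assembly

def polyVar (n : ℕ) {R : Type*} [CommRing R] (i : ℕ) : MvPolynomial (Fin n) R :=
  if h : i < n then X ⟨i, h⟩ else 1

variable {n : ℕ}

theorem pairDiff_polyVar {R : Type*} [CommRing R] :
    pairDiff n (polyVar n (R := R)) = vandermondeProd n R := by
  rw [pairDiff, prod_pairs_eq_prod_Ioi (fun i j => polyVar n (R := R) j - polyVar n i)]
  simp [polyVar, vandermondeProd]

def q₁L : Lq := ⟨q₁, Subring.subset_closure (by simp)⟩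

def q₂L : Lq := ⟨q₂, Subring.subset_closure (by simp)⟩

@[simp] theorem coe_q₁L : (q₁L : FF) = q₁ := rfl

@[simp] theorem coe_q₂L : (q₂L : FF) = q₂ := rfl

def symTermNumerPoly (n : ℕ) (m : ℕ → ℤ) : MvPolynomial (Fin n) Lq :=
  symTermNumer n (fun i => (m i + expShift n m).toNat) (C q₁L) (C q₂L) (polyVar n)

variable (n) in
def evalZ : MvPolynomial (Fin n) Lq →+* FF := eval₂Hom Lq.subtype fun i => zz i

theorem evalZ_vandermondeProd_ne_zero : evalZ n (vandermondeProd n Lq) ≠ 0 := by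
  simp only [evalZ, vandermondeProd, map_prod, map_sub, coe_eval₂Hom, eval₂_X]
  exact prod_ne_zero_iff.2 fun i _ => prod_ne_zero_iff.2 fun j hj =>
    zz_sub_zz_ne_zero (Fin.val_injective.ne (mem_Ioi.1 hj).ne)

theorem evalZ_rename_polyVar (σ : Perm (Fin n)) :
    (evalZ n).comp (rename σ).toRingHom ∘ polyVar n = vv n σ := by
  funext i
  simp only [Function.comp_apply, polyVar, vv]
  split_ifs <;> simp [evalZ]

theorem vv_of_lt (σ : Perm (Fin n)) {i : ℕ} (h : i < n) : vv n σ i = zz (σ ⟨i, h⟩) := dif_pos h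

theorem symTerm_vv_mul_evalZ (m : ℕ → ℤ) (σ : Perm (Fin n)) :
    symTerm n m (vv n σ) * evalZ n (vandermondeProd n Lq) =
      (∏ i : Fin n, zz i) ^ (-((expShift n m + (n - 1) : ℕ) : ℤ)) *
        evalZ n (Perm.sign σ • rename σ (symTermNumerPoly n m)) := by
  have hne : ∀ {i j : ℕ} (hi : i < n) (hj : j < n), i ≠ j → (σ ⟨i, hi⟩ : ℕ) ≠ σ ⟨j, hj⟩ :=
    fun _ _ hij h => hij (by simpa using σ.injective (Fin.val_injective h))
  have key := symTerm_mul_pairDiff (m := m) (v := vv n σ)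
    (fun i hi => by rw [vv_of_lt σ hi]; exact zz_ne_zero _)
    (fun i j hij hj => by
      rw [vv_of_lt σ hj, vv_of_lt σ (hij.trans hj)]
      exact zz_sub_zz_ne_zero (hne _ _ hij.ne))
    (fun t ht => by
      rw [vv_of_lt σ ht, vv_of_lt σ (Nat.lt_of_succ_lt ht)]
      exact zz_sub_q₂_mul_zz_ne_zero _ _)
  have hN : evalZ n (rename σ (symTermNumerPoly n m)) =
      symTermNumer n (fun i => (m i + expShift n m).toNat) q₁ q₂ (vv n σ) := by
    have h := map_symTermNumer (n := n) ((evalZ n).comp (rename σ).toRingHom)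
      (fun i => (m i + expShift n m).toNat) (C q₁L) (C q₂L) (polyVar n)
    rw [evalZ_rename_polyVar] at h
    simpa [evalZ, symTermNumerPoly] using h
  have hV : pairDiff n (vv n σ) = Perm.sign σ • evalZ n (vandermondeProd n Lq) := by
    rw [← evalZ_rename_polyVar σ, ← map_pairDiff, pairDiff_polyVar]
    simp [rename_vandermondeProd]
  have hP : ∏ i ∈ range n, vv n σ i = ∏ i : Fin n, zz i := by
    rw [← Fin.prod_univ_eq_prod_range]
    simp_rw [vv_of_lt σ (Fin.is_lt _)]
    exact Equiv.prod_comp σ fun i => zz i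
  have hsign : ((Perm.sign σ : ℤ) : FF) * (Perm.sign σ : ℤ) = 1 := by
    rw [← Int.cast_mul, ← Units.val_mul, Int.units_mul_self, Units.val_one, Int.cast_one]
  rw [hV, ← hN, hP, Units.smul_def, zsmul_eq_mul] at key
  rw [map_zsmul_unit, Units.smul_def, zsmul_eq_mul]
  linear_combination (Perm.sign σ : ℤ) * key -
    symTerm n m (vv n σ) * evalZ n (vandermondeProd n Lq) * hsign

end Assembly

theorem exists_laurentCoeffs_eq_sum_symTerm (n : ℕ) (m : ℕ → ℤ) :
    ∃ c : (Fin n → ℤ) →₀ FF, HasLqCoeffs c ∧ IsSymmC c ∧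
      evalC c (fun i => zz i) = ∑ σ : Perm (Fin n), symTerm n m (vv n σ) := by
  obtain ⟨h, hsym, hh⟩ := exists_isSymmetric_alternant_eq_vandermondeProd_mul (symTermNumerPoly n m)
  set k : ℤ := -((expShift n m + (n - 1) : ℕ) : ℤ)
  refine ⟨laurentCoeffs Lq k h, fun m _ => laurentCoeffs_mem k h m,
    laurentCoeffs_comp_perm k hsym, ?_⟩
  have hsum : (∑ σ : Perm (Fin n), symTerm n m (vv n σ)) * evalZ n (vandermondeProd n Lq) =
      (∏ i : Fin n, zz i) ^ k * (evalZ n (vandermondeProd n Lq) * evalZ n h) := by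
    rw [sum_mul, ← map_mul, ← hh, alternant, map_sum, mul_sum]
    exact sum_congr rfl fun σ _ => symTerm_vv_mul_evalZ m σ
  rw [evalC_laurentCoeffs k h fun i => zz_ne_zero i]
  refine (mul_right_cancel₀ (evalZ_vandermondeProd_ne_zero (n := n)) ?_).symm
  rw [hsum]
  simp only [evalZ, coe_eval₂Hom]
  ring

end Shuffle

theorem statement13_general (n : ℕ) (d : ℤ) :
    ∃ c : (Fin n → ℤ) →₀ FF, HasLqCoeffs c ∧ IsSymmC c ∧
      evalC c (fun i => zz i) = symH n d :=
  Shuffle.exists_laurentCoeffs_eq_sum_symTerm n _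

theorem statement13 (n : ℕ) (hn : 1 ≤ n) (d : ℤ) :
    ∃ c : (Fin n → ℤ) →₀ FF, HasLqCoeffs c ∧ IsSymmC c ∧
      evalC c (fun i => zz i) = symH n d :=
  statement13_general n d

end
end
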